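/- Entropy increase under doubly stochastic operations: Let 𝔄 = ⊕_i M_{n_i}(ℂ) and 𝔅 = ⊕_j M_{m_j}(ℂ) be finite direct sums of matrix algebras with their canonical traces, and let Λ: 𝔄 → 𝔅 be a completely positive linear map that is trace-preserving (τ_𝔅(Λ(A)) = τ_𝔄(A) for all A ∈ 𝔄) and unital (Λ(1_𝔄) = 1_𝔅). Then for every state σ on 𝔄, H(Λ(σ)) ≥ H(σ). -/

import Mathlib

open scoped ComplexOrder Kronecker
open Matrix

noncomputable def negMulLogb (x : ℝ) : ℝ := -(x * Real.logb 2 x)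

noncomputable def shannonEntropy {α : Type*} [Fintype α] (p : α → ℝ) : ℝ :=
  ∑ i, negMulLogb (p i)

noncomputable def mutualInfo {α β : Type*} [Fintype α] [Fintype β]
    (p : α → β → ℝ) : ℝ :=
  shannonEntropy (fun i => ∑ j, p i j) + shannonEntropy (fun j => ∑ i, p i j)
    - shannonEntropy (fun ij : α × β => p ij.1 ij.2)

noncomputable def binEnt (t : ℝ) : ℝ := negMulLogb t + negMulLogb (1 - t)

noncomputable def vnEntropy {α : Type*} [Fintype α] [DecidableEq α]
    (ρ : Matrix α α ℂ) : ℝ :=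
  if h : ρ.IsHermitian then ∑ i, negMulLogb (h.eigenvalues i) else 0

noncomputable def matLogb {α : Type*} [Fintype α] [DecidableEq α]
    (A : Matrix α α ℂ) : Matrix α α ℂ :=
  if h : A.IsHermitian then
    (h.eigenvectorUnitary : Matrix α α ℂ) *
      Matrix.diagonal (fun i => (Real.logb 2 (h.eigenvalues i) : ℂ)) *
      star (h.eigenvectorUnitary : Matrix α α ℂ)
  else 0

def MatState {α : Type*} [Fintype α] [DecidableEq α] (ρ : Matrix α α ℂ) : Prop :=
  ρ.PosSemidef ∧ ρ.trace = 1

def IsProjn {α : Type*} [Fintype α] [DecidableEq α] (p : Matrix α α ℂ) : Prop :=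
  p.IsHermitian ∧ p * p = p

def IsMinProjOf {α : Type*} [Fintype α] [DecidableEq α]
    (X : StarSubalgebra ℂ (Matrix α α ℂ)) (p : Matrix α α ℂ) : Prop :=
  p ∈ X ∧ IsProjn p ∧ p ≠ 0 ∧
    ∀ q ∈ X, IsProjn q → q * p = q → q = 0 ∨ q = p

def IsCanonicalTrace {α : Type*} [Fintype α] [DecidableEq α]
    (X : StarSubalgebra ℂ (Matrix α α ℂ)) (τ : Matrix α α ℂ →ₗ[ℂ] ℂ) : Prop :=
  (∀ x ∈ X, ∀ y ∈ X, τ (x * y) = τ (y * x)) ∧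
  (∀ x ∈ X, 0 ≤ τ (star x * x)) ∧
  (∀ p, IsMinProjOf X p → τ p = 1)

def IsRestriction {α : Type*} [Fintype α] [DecidableEq α]
    (X : StarSubalgebra ℂ (Matrix α α ℂ)) (τ : Matrix α α ℂ →ₗ[ℂ] ℂ)
    (ρ r : Matrix α α ℂ) : Prop :=
  r ∈ X ∧ r.PosSemidef ∧ ∀ x ∈ X, τ (r * x) = (ρ * x).trace

noncomputable def algEntropy {α : Type*} [Fintype α] [DecidableEq α]
    (τ : Matrix α α ℂ →ₗ[ℂ] ℂ) (r : Matrix α α ℂ) : ℝ :=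
  -(τ (r * matLogb r)).re

def IsAlgEntropy {α : Type*} [Fintype α] [DecidableEq α]
    (X : StarSubalgebra ℂ (Matrix α α ℂ)) (ρ : Matrix α α ℂ) (H : ℝ) : Prop :=
  ∃ τ r, IsCanonicalTrace X τ ∧ IsRestriction X τ ρ r ∧ H = algEntropy τ r

def CompatibleAlg {α : Type*} [Fintype α] [DecidableEq α]
    (X Y : StarSubalgebra ℂ (Matrix α α ℂ)) : Prop :=
  ∀ x ∈ X, ∀ y ∈ Y, x * y = y * x

/-- The ampliation `Λ ⊗ id_{M_k(ℂ)}` of a linear map between finite direct sums of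
matrix algebras, realized entrywise. -/
noncomputable def ampliation {ι κ : Type} [Fintype ι] [Fintype κ]
    {d : ι → ℕ} {e : κ → ℕ}
    (Λ : (∀ i, Matrix (Fin (d i)) (Fin (d i)) ℂ) →ₗ[ℂ]
         (∀ j, Matrix (Fin (e j)) (Fin (e j)) ℂ)) (k : ℕ)
    (A : ∀ i, Matrix (Fin (d i) × Fin k) (Fin (d i) × Fin k) ℂ) :
    ∀ j, Matrix (Fin (e j) × Fin k) (Fin (e j) × Fin k) ℂ :=
  fun j => Matrix.of fun p q =>
    Λ (fun i => Matrix.of fun a b => A i (a, p.2) (b, q.2)) j p.1 q.1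

/-- Complete positivity of a linear map between finite direct sums of matrix
algebras: every ampliation maps positive elements to positive elements. -/
def IsCompletelyPositive {ι κ : Type} [Fintype ι] [Fintype κ]
    {d : ι → ℕ} {e : κ → ℕ}
    (Λ : (∀ i, Matrix (Fin (d i)) (Fin (d i)) ℂ) →ₗ[ℂ]
         (∀ j, Matrix (Fin (e j)) (Fin (e j)) ℂ)) : Prop :=
  ∀ k : ℕ, ∀ A : ∀ i, Matrix (Fin (d i) × Fin k) (Fin (d i) × Fin k) ℂ,
    (∀ i, (A i).PosSemidef) → ∀ j, (ampliation Λ k A j).PosSemidef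


section Aux

variable {n : Type*} [Fintype n] [DecidableEq n]

noncomputable def sproj {M : Matrix n n ℂ} (h : M.IsHermitian) (a : n) : Matrix n n ℂ :=
  (h.eigenvectorUnitary : Matrix n n ℂ) * Matrix.diagonal (Pi.single a 1) *
    star (h.eigenvectorUnitary : Matrix n n ℂ)

lemma star_unitary_mul {M : Matrix n n ℂ} (h : M.IsHermitian) :
    star (h.eigenvectorUnitary : Matrix n n ℂ) * (h.eigenvectorUnitary : Matrix n n ℂ) = 1 :=
  Matrix.mem_unitaryGroup_iff'.mp h.eigenvectorUnitary.2

lemma unitary_mul_star {M : Matrix n n ℂ} (h : M.IsHermitian) :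
    (h.eigenvectorUnitary : Matrix n n ℂ) * star (h.eigenvectorUnitary : Matrix n n ℂ) = 1 :=
  Matrix.mem_unitaryGroup_iff.mp h.eigenvectorUnitary.2

lemma sproj_posSemidef {M : Matrix n n ℂ} (h : M.IsHermitian) (a : n) :
    (sproj h a).PosSemidef := by
  have hd : (Matrix.diagonal (Pi.single a 1 : n → ℂ)).PosSemidef := by
    refine Matrix.posSemidef_diagonal_iff.mpr fun i => ?_
    rcases eq_or_ne i a with rfl | hne
    · simp
    · simp [Pi.single_apply, hne]
  simpa [sproj, Matrix.star_eq_conjTranspose] using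
    hd.mul_mul_conjTranspose_same (h.eigenvectorUnitary : Matrix n n ℂ)

lemma trace_sproj {M : Matrix n n ℂ} (h : M.IsHermitian) (a : n) :
    (sproj h a).trace = 1 := by
  rw [sproj, Matrix.trace_mul_cycle, star_unitary_mul h, one_mul, Matrix.trace_diagonal]
  simp

lemma sum_sproj {M : Matrix n n ℂ} (h : M.IsHermitian) :
    ∑ a, sproj h a = 1 := by
  unfold sproj
  rw [← Finset.sum_mul, ← Finset.mul_sum]
  have : ∑ i : n, Matrix.diagonal (Pi.single i (1:ℂ)) = 1 := by
    ext x y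
    simp [Matrix.sum_apply, Matrix.diagonal_apply, Pi.single_apply, Matrix.one_apply]
  rw [this, mul_one, unitary_mul_star h]

lemma diagonal_eigenvalues_eq_sum {M : Matrix n n ℂ} (h : M.IsHermitian) :
    Matrix.diagonal (RCLike.ofReal ∘ h.eigenvalues : n → ℂ)
      = ∑ a, (h.eigenvalues a : ℂ) • Matrix.diagonal (Pi.single a 1) := by
  ext x y
  simp [Matrix.sum_apply, Matrix.diagonal_apply, Pi.single_apply]

lemma spectral_sum {M : Matrix n n ℂ} (h : M.IsHermitian) :
    M = ∑ a, (h.eigenvalues a : ℂ) • sproj h a := by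
  conv_lhs => rw [h.spectral_theorem, Unitary.conjStarAlgAut_apply]
  rw [diagonal_eigenvalues_eq_sum h, Finset.mul_sum, Finset.sum_mul]
  refine Finset.sum_congr rfl fun a _ => ?_
  simp [sproj, Matrix.mul_smul, Matrix.smul_mul]

lemma trace_sproj_mul {M : Matrix n n ℂ} (h : M.IsHermitian) (b : n) :
    (sproj h b * M).trace = (h.eigenvalues b : ℂ) := by
  have key : (sproj h b * ((h.eigenvectorUnitary : Matrix n n ℂ) *
      Matrix.diagonal (RCLike.ofReal ∘ h.eigenvalues) *
      star (h.eigenvectorUnitary : Matrix n n ℂ))).trace = (h.eigenvalues b : ℂ) := by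
    rw [sproj]
    simp only [mul_assoc]
    rw [show ∀ X : Matrix n n ℂ, star (h.eigenvectorUnitary : Matrix n n ℂ) *
        ((h.eigenvectorUnitary : Matrix n n ℂ) * X) = X from fun X => by
      rw [← mul_assoc, star_unitary_mul h, one_mul]]
    rw [Matrix.trace_mul_comm]
    simp only [mul_assoc]
    rw [star_unitary_mul h, mul_one, Matrix.diagonal_mul_diagonal, Matrix.trace_diagonal]
    simp [Pi.single_apply, ite_mul, Finset.sum_ite_eq']
  have hM := h.spectral_theorem
  rw [Unitary.conjStarAlgAut_apply] at hM
  rw [← hM] at key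
  exact key

lemma psd_trace_nonneg {A : Matrix n n ℂ} (hA : A.PosSemidef) : 0 ≤ A.trace := by
  exact hA.trace_nonneg

lemma trace_mul_nonneg {A B : Matrix n n ℂ} (hA : A.PosSemidef) (hB : B.PosSemidef) :
    0 ≤ (A * B).trace := by
  open scoped MatrixOrder in
  have hs : (CFC.sqrt A).PosSemidef := (CFC.sqrt_nonneg A).posSemidef
  open scoped MatrixOrder in
  have h1 : A * B = CFC.sqrt A * (CFC.sqrt A * B) := by
    rw [← mul_assoc, CFC.sqrt_mul_sqrt_self A hA.nonneg]
  rw [h1, Matrix.trace_mul_comm]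
  have : CFC.sqrt A * B * CFC.sqrt A = CFC.sqrt A * B * (CFC.sqrt A)ᴴ := by rw [hs.1]
  rw [this]
  exact psd_trace_nonneg (hB.mul_mul_conjTranspose_same _)


variable {n : Type*} [Fintype n] [DecidableEq n]

lemma jensen_negMulLogb {A : Type*} [Fintype A] (w lam : A → ℝ) (hw : ∀ a, 0 ≤ w a)
    (hw1 : ∑ a, w a = 1) (hl : ∀ a, 0 ≤ lam a) :
    ∑ a, w a * (-(lam a * Real.logb 2 (lam a))) ≤
      -((∑ a, w a * lam a) * Real.logb 2 (∑ a, w a * lam a)) := by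
  have key := Real.concaveOn_negMulLog.le_map_sum (t := Finset.univ) (w := w) (p := lam)
    (fun a _ => hw a) hw1 (fun a _ => Set.mem_Ici.mpr (hl a))
  simp only [smul_eq_mul, Real.negMulLog] at key
  have h2 : (0:ℝ) ≤ (Real.log 2)⁻¹ := inv_nonneg.mpr (Real.log_nonneg one_le_two)
  have := mul_le_mul_of_nonneg_left key h2
  calc ∑ a, w a * (-(lam a * Real.logb 2 (lam a)))
      = (Real.log 2)⁻¹ * ∑ a, w a * (-(lam a * Real.log (lam a))) := by
        rw [Finset.mul_sum]; refine Finset.sum_congr rfl fun a _ => ?_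
        simp [Real.logb]; ring
    _ ≤ (Real.log 2)⁻¹ * (-((∑ a, w a * lam a) * Real.log (∑ a, w a * lam a))) := by
        refine le_trans (le_of_eq ?_) (le_trans this (le_of_eq ?_)) <;>
          [skip; skip] <;> ring_nf <;>
          refine congrArg _ (Finset.sum_congr rfl fun a _ => by ring)
    _ = -((∑ a, w a * lam a) * Real.logb 2 (∑ a, w a * lam a)) := by
        simp [Real.logb]; ring

lemma pi_single_sum {I : Type*} [DecidableEq I] {f : I → Type*} [∀ i, AddCommMonoid (f i)]
    {A : Type*} [Fintype A] (i : I) (g : A → f i) :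
    Pi.single i (∑ a, g a) = ∑ a, Pi.single (M := f) i (g a) := by
  funext k
  rcases eq_or_ne k i with rfl | h
  · simp [Finset.sum_apply]
  · simp [Finset.sum_apply, Pi.single_eq_of_ne h]

lemma pos_of_CP {ι κ : Type} [Fintype ι] [Fintype κ]
    {d : ι → ℕ} {e : κ → ℕ}
    (Λ : (∀ i, Matrix (Fin (d i)) (Fin (d i)) ℂ) →ₗ[ℂ]
         (∀ j, Matrix (Fin (e j)) (Fin (e j)) ℂ))
    (hCP : IsCompletelyPositive Λ)
    (X : ∀ i, Matrix (Fin (d i)) (Fin (d i)) ℂ)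
    (hX : ∀ i, (X i).PosSemidef) (j : κ) : (Λ X j).PosSemidef := by
  set A : ∀ i, Matrix (Fin (d i) × Fin 1) (Fin (d i) × Fin 1) ℂ :=
    fun i => (X i).submatrix Prod.fst Prod.fst with hA
  have hApos : ∀ i, (A i).PosSemidef := fun i => (hX i).submatrix _
  have h := hCP 1 A hApos j
  have key : Λ X j = (ampliation Λ 1 A j).submatrix
      (fun a => (a, (0 : Fin 1))) (fun a => (a, (0 : Fin 1))) := by
    ext a b
    show Λ X j a b = Λ (fun i => Matrix.of fun p q => A i (p, 0) (q, 0)) j a b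
    rfl
  rw [key]
  exact h.submatrix _

end Aux

/-- entropy increase under doubly stochastic operations: a unital,
trace-preserving, completely positive map `Λ` between finite direct sums of matrix
algebras does not decrease the von Neumann entropy of states. -/
theorem entropy_increase_doubly_stochastic {ι κ : Type} [Fintype ι] [Fintype κ]
    (d : ι → ℕ) (e : κ → ℕ)
    (Λ : (∀ i, Matrix (Fin (d i)) (Fin (d i)) ℂ) →ₗ[ℂ]
         (∀ j, Matrix (Fin (e j)) (Fin (e j)) ℂ))
    (hCP : IsCompletelyPositive Λ)
    (hTP : ∀ A, ∑ j, (Λ A j).trace = ∑ i, (A i).trace)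
    (hUnital : Λ 1 = 1)
    (σ : ∀ i, Matrix (Fin (d i)) (Fin (d i)) ℂ)
    (hσpos : ∀ i, (σ i).PosSemidef) (hσtr : ∑ i, (σ i).trace = 1) :
    ∑ i, vnEntropy (σ i) ≤ ∑ j, vnEntropy (Λ σ j) := by
  classical
  have hσh : ∀ i, (σ i).IsHermitian := fun i => (hσpos i).1
  have hΛpos : ∀ j, (Λ σ j).PosSemidef := fun j => pos_of_CP Λ hCP σ hσpos j
  have hΛh : ∀ j, (Λ σ j).IsHermitian := fun j => (hΛpos j).1
  set P : ((i : ι) × Fin (d i)) → (∀ i, Matrix (Fin (d i)) (Fin (d i)) ℂ) :=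
    fun x => Pi.single x.1 (sproj (hσh x.1) x.2) with hPdef
  set lam : ((i : ι) × Fin (d i)) → ℝ := fun x => (hσh x.1).eigenvalues x.2 with hlam
  set mu : ((j : κ) × Fin (e j)) → ℝ := fun y => (hΛh y.1).eigenvalues y.2 with hmu
  have hPpos : ∀ x i, ((P x) i).PosSemidef := by
    intro x i
    rcases eq_or_ne i x.1 with rfl | hne
    · simpa [hPdef] using sproj_posSemidef (hσh x.1) x.2
    · simp only [hPdef, Pi.single_eq_of_ne hne]
      exact Matrix.PosSemidef.zero
  have htrP : ∀ x, ∑ i, ((P x) i).trace = 1 := by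
    intro x
    rw [Finset.sum_eq_single x.1]
    · simp [hPdef, trace_sproj]
    · intro i _ hne
      simp [hPdef, Pi.single_eq_of_ne hne]
    · simp
  have hPsum : ∑ x : (i : ι) × Fin (d i), P x = 1 := by
    rw [← Finset.univ_sigma_univ, Finset.sum_sigma]
    have h1 : ∀ i, (∑ a, P ⟨i, a⟩) = Pi.single i (1 : Matrix (Fin (d i)) (Fin (d i)) ℂ) := by
      intro i
      rw [show (1 : Matrix (Fin (d i)) (Fin (d i)) ℂ) = ∑ a, sproj (hσh i) a from
        (sum_sproj (hσh i)).symm, pi_single_sum]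
    calc ∑ i, ∑ a, P ⟨i, a⟩ = ∑ i, Pi.single i ((1 : ∀ i, Matrix (Fin (d i)) (Fin (d i)) ℂ) i) := by
          exact Finset.sum_congr rfl fun i _ => h1 i
      _ = 1 := Finset.univ_sum_single _
  have hσdecomp : σ = ∑ x : (i : ι) × Fin (d i), ((lam x : ℂ) • P x) := by
    rw [← Finset.univ_sigma_univ, Finset.sum_sigma]
    calc σ = ∑ i, Pi.single i (σ i) := (Finset.univ_sum_single σ).symm
      _ = ∑ i, ∑ a, ((lam ⟨i, a⟩ : ℂ) • P ⟨i, a⟩) := by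
          refine Finset.sum_congr rfl fun i _ => ?_
          rw [show σ i = ∑ a, ((hσh i).eigenvalues a : ℂ) • sproj (hσh i) a from
            spectral_sum (hσh i), pi_single_sum]
          refine Finset.sum_congr rfl fun a _ => ?_
          rw [Pi.single_smul]
  -- complex trace quantities
  have hrowC : ∀ x, ∑ y : (j : κ) × Fin (e j),
      (sproj (hΛh y.1) y.2 * Λ (P x) y.1).trace = 1 := by
    intro x
    rw [← Finset.univ_sigma_univ, Finset.sum_sigma]
    have h1 : ∀ j, ∑ b, (sproj (hΛh j) b * Λ (P x) j).trace = (Λ (P x) j).trace := by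
      intro j
      rw [← Matrix.trace_sum, ← Finset.sum_mul, sum_sproj, one_mul]
    rw [Finset.sum_congr rfl fun j _ => h1 j, hTP, htrP]
  have hcolC : ∀ y : (j : κ) × Fin (e j), ∑ x : (i : ι) × Fin (d i),
      (sproj (hΛh y.1) y.2 * Λ (P x) y.1).trace = 1 := by
    intro y
    have h1 : ∑ x : (i : ι) × Fin (d i), Λ (P x) y.1 = 1 := by
      calc ∑ x : (i : ι) × Fin (d i), Λ (P x) y.1
          = (Λ (∑ x : (i : ι) × Fin (d i), P x)) y.1 := by
            rw [map_sum]; simp [Finset.sum_apply]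
        _ = 1 := by rw [hPsum, hUnital]; rfl
    rw [← Matrix.trace_sum, ← Finset.mul_sum, h1, mul_one, trace_sproj]
  have hmuC : ∀ y : (j : κ) × Fin (e j),
      (mu y : ℂ) = ∑ x : (i : ι) × Fin (d i),
        (lam x : ℂ) * (sproj (hΛh y.1) y.2 * Λ (P x) y.1).trace := by
    intro y
    have h2 : Λ σ y.1 = ∑ x : (i : ι) × Fin (d i), (lam x : ℂ) • Λ (P x) y.1 := by
      conv_lhs => rw [hσdecomp]
      rw [map_sum]
      simp [Finset.sum_apply]
    calc (mu y : ℂ) = (sproj (hΛh y.1) y.2 * Λ σ y.1).trace :=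
          (trace_sproj_mul (hΛh y.1) y.2).symm
      _ = (sproj (hΛh y.1) y.2 * ∑ x : (i : ι) × Fin (d i),
            (lam x : ℂ) • Λ (P x) y.1).trace :=
          congrArg (fun M => (sproj (hΛh y.1) y.2 * M).trace) h2
      _ = ∑ x : (i : ι) × Fin (d i),
            (lam x : ℂ) * (sproj (hΛh y.1) y.2 * Λ (P x) y.1).trace := by
          rw [Finset.mul_sum, Matrix.trace_sum]
          refine Finset.sum_congr rfl fun x _ => ?_
          rw [mul_smul_comm, Matrix.trace_smul]
          simp
  -- real weights
  set D : ((i : ι) × Fin (d i)) → ((j : κ) × Fin (e j)) → ℝ :=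
    fun x y => ((sproj (hΛh y.1) y.2 * Λ (P x) y.1).trace).re with hDdef
  have hD0 : ∀ x y, 0 ≤ D x y := by
    intro x y
    have h := trace_mul_nonneg (sproj_posSemidef (hΛh y.1) y.2)
      (pos_of_CP Λ hCP (P x) (hPpos x) y.1)
    simpa using (Complex.le_def.mp h).1
  have hrow : ∀ x, ∑ y, D x y = 1 := by
    intro x
    have := congrArg Complex.re (hrowC x)
    simpa [Complex.re_sum] using this
  have hcol : ∀ y, ∑ x, D x y = 1 := by
    intro y
    have := congrArg Complex.re (hcolC y)
    simpa [Complex.re_sum] using this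
  have hmuR : ∀ y, mu y = ∑ x, D x y * lam x := by
    intro y
    have := congrArg Complex.re (hmuC y)
    simpa [Complex.re_sum, Complex.re_ofReal_mul, mul_comm] using this
  have hlam0 : ∀ x, 0 ≤ lam x := fun x => (hσpos x.1).eigenvalues_nonneg x.2
  -- entropies
  have hHσ : ∑ i, vnEntropy (σ i) = ∑ x : (i : ι) × Fin (d i), negMulLogb (lam x) := by
    rw [← Finset.univ_sigma_univ, Finset.sum_sigma]
    refine Finset.sum_congr rfl fun i _ => ?_
    rw [vnEntropy, dif_pos (hσh i)]
  have hHΛ : ∑ j, vnEntropy (Λ σ j) = ∑ y : (j : κ) × Fin (e j), negMulLogb (mu y) := by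
    rw [← Finset.univ_sigma_univ, Finset.sum_sigma]
    refine Finset.sum_congr rfl fun j _ => ?_
    rw [vnEntropy, dif_pos (hΛh j)]
  rw [hHσ, hHΛ]
  calc ∑ x : (i : ι) × Fin (d i), negMulLogb (lam x)
      = ∑ x : (i : ι) × Fin (d i), ∑ y, D x y * negMulLogb (lam x) := by
        refine Finset.sum_congr rfl fun x _ => ?_
        rw [← Finset.sum_mul, hrow, one_mul]
    _ = ∑ y : (j : κ) × Fin (e j), ∑ x, D x y * negMulLogb (lam x) := Finset.sum_comm
    _ ≤ ∑ y : (j : κ) × Fin (e j), negMulLogb (mu y) := by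
        refine Finset.sum_le_sum fun y _ => ?_
        rw [hmuR y]
        have := jensen_negMulLogb (fun x => D x y) lam (fun x => hD0 x y) (hcol y) hlam0
        simpa [negMulLogb] using this
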